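/- arXiv:1911.00642 — 10 statements merged into one kernel-verified Lean document; each statement's English description precedes it below -/
import Mathlib

section
/- For NIM with subtraction set A = {1, L} where L is even and L ≥ 2, the second player wins the game with n stones if and only if n mod (L+1) is an even number in {0, 2, 4, ..., L-2}. -/
/-!
Any two predicates satisfying the P-position recursion of a subtraction game without a zero move
agree, by strong induction on the pile. So it suffices to check that "the residue `r = n % (L + 1)`
is even and at most `L - 2`" satisfies the recursion for `{1, L}`. Modulo `L + 1` the two moves
send `r` to `r - 1` and `r + 1` (cyclically), both of which flip parity, except that from `r = L`
the move `L` reaches the residue `0` and from `r = 0` the move `1` reaches the residue `L`.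
-/

theorem iff_of_subtractionGame_rec {A : Finset ℕ} (hA : 0 ∉ A) {P Q : ℕ → Prop}
    (hP : ∀ n, P n ↔ ∀ a ∈ A, a ≤ n → ¬ P (n - a))
    (hQ : ∀ n, Q n ↔ ∀ a ∈ A, a ≤ n → ¬ Q (n - a)) (n : ℕ) : P n ↔ Q n := by
  induction n using Nat.strong_induction_on with
  | _ n ih =>
    rw [hP, hQ]
    refine forall₂_congr fun a ha => imp_congr_right fun han => not_congr (ih _ ?_)
    have : a ≠ 0 := fun h => hA (h ▸ ha)
    omega

theorem Nat.sub_mod_eq_ite {a m n : ℕ} (han : a ≤ n) (ham : a ≤ m) :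
    (n - a) % m = if a ≤ n % m then n % m - a else n % m + m - a := by
  rcases Nat.eq_zero_or_pos m with rfl | hm
  · simp_all
  have hdiv := Nat.mod_add_div n m
  have hlt := Nat.mod_lt n hm
  split_ifs with h
  · rw [show n - a = n % m - a + m * (n / m) by omega, Nat.add_mul_mod_self_left,
      Nat.mod_eq_of_lt (by omega)]
  · have hq : 0 < n / m := Nat.pos_of_ne_zero fun h0 => by simp [h0] at hdiv; omega
    have hmq := Nat.le_mul_of_pos_right m hq
    rw [show n - a = n % m + m - a + m * (n / m - 1) by rw [Nat.mul_sub_one]; omega,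
      Nat.add_mul_mod_self_left, Nat.mod_eq_of_lt (by omega)]

def IsLosingResidue (L n : ℕ) : Prop := Even (n % (L + 1)) ∧ n % (L + 1) ≤ L - 2

theorem isLosingResidue_iff {L : ℕ} (hL : Even L) (hL2 : 2 ≤ L) (n : ℕ) :
    IsLosingResidue L n ↔
      (1 ≤ n → ¬ IsLosingResidue L (n - 1)) ∧ (L ≤ n → ¬ IsLosingResidue L (n - L)) := by
  have hlt : n % (L + 1) < L + 1 := Nat.mod_lt n (by omega)
  have hsmall : n < L + 1 → n % (L + 1) = n := Nat.mod_eq_of_lt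
  rw [Nat.even_iff] at hL
  unfold IsLosingResidue
  rcases Nat.eq_zero_or_pos n with rfl | hn
  · simp only [Nat.zero_mod, Even.zero, true_and, nonpos_iff_eq_zero, one_ne_zero,
      false_implies]
    omega
  rw [Nat.sub_mod_eq_ite (a := 1) (m := L + 1) hn (by omega)]
  by_cases hnL : L ≤ n
  · rw [Nat.sub_mod_eq_ite (m := L + 1) hnL (by omega)]
    simp only [Nat.even_iff]
    split_ifs <;> omega
  · simp only [Nat.even_iff, hnL, false_implies, and_true]
    split_ifs <;> omega

/-- NIM({1,L};n), L even ≥ 2: second player wins iff n mod (L+1) is an even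
number in {0,2,...,L-2}. -/
theorem nim_one_L_even (L : ℕ) (hL : Even L) (hL2 : 2 ≤ L)
    (P : ℕ → Prop)
    (hP : ∀ n, P n ↔ ∀ a ∈ ({1, L} : Finset ℕ), a ≤ n → ¬ P (n - a)) :
    ∀ n, P n ↔ (Even (n % (L + 1)) ∧ n % (L + 1) ≤ L - 2) := by
  have hzero : 0 ∉ ({1, L} : Finset ℕ) := by
    simp only [Finset.mem_insert, Finset.mem_singleton]
    omega
  refine iff_of_subtractionGame_rec (Q := IsLosingResidue L) hzero hP fun n => ?_
  simpa only [Finset.forall_mem_insert, Finset.mem_singleton, forall_eq] using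
    isLosingResidue_iff hL hL2 n
end

section
/- For NIM with subtraction set A = {1, L, L+1} where L is even and L ≥ 2, the second player wins the game with n stones if and only if n mod 2L is an even number in {0, 2, 4, ..., L-2}. -/
/-!
Any two predicates satisfying the recursion of NIM agree, by strong induction, so it suffices to
check that the claimed set of losing positions satisfies the recursion. Reducing modulo `2L`:
from a losing residue `r` (even, `r ≤ L - 2`) the odd moves `1` and `L + 1` change the parity and
the move `L` lands in `[L, 2L)`; from any other residue one of the three moves reaches an even
residue at most `L - 2` without wrapping around.
-/

theorem nim_iff_of_recursion {A : Set ℕ} (hA : ∀ a ∈ A, 0 < a) {P Q : ℕ → Prop}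
    (hP : ∀ n, P n ↔ ∀ a ∈ A, a ≤ n → ¬P (n - a))
    (hQ : ∀ n, Q n ↔ ∀ a ∈ A, a ≤ n → ¬Q (n - a)) (n : ℕ) : P n ↔ Q n := by
  induction n using Nat.strong_induction_on with
  | _ n ih =>
    rw [hP, hQ]
    refine forall₂_congr fun a ha => imp_congr_right fun han => not_congr (ih _ ?_)
    have := hA a ha
    omega

def nimOneLSuccLosing (L n : ℕ) : Prop :=
  Even (n % (2 * L)) ∧ n % (2 * L) ≤ L - 2

namespace nimOneLSuccLosing

variable {L : ℕ}

theorem even {n : ℕ} (hn : nimOneLSuccLosing L n) : Even n := by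
  simpa only [Nat.even_iff, Nat.mod_mod_of_dvd n (dvd_mul_right 2 L)] using hn.1

theorem sub_of_le_mod {n a : ℕ} (ha : a ≤ n % (2 * L)) (heven : Even (n % (2 * L) - a))
    (hle : n % (2 * L) - a ≤ L - 2) : nimOneLSuccLosing L (n - a) := by
  rw [nimOneLSuccLosing, ← Nat.mod_sub_of_le ha]
  exact ⟨heven, hle⟩

theorem not_sub (hL : Even L) (hL0 : 0 < L) {n a : ℕ} (hn : nimOneLSuccLosing L n)
    (ha : a ∈ ({1, L, L + 1} : Finset ℕ)) (han : a ≤ n) : ¬nimOneLSuccLosing L (n - a) := by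
  intro hna
  simp only [Finset.mem_insert, Finset.mem_singleton] at ha
  have hLmod := Nat.even_iff.mp hL
  have hnmod := Nat.even_iff.mp hn.even
  have hnamod := Nat.even_iff.mp hna.even
  rcases ha with rfl | ha | rfl
  · omega
  · subst a
    have hwrap : n % (2 * L) = (n - L) % (2 * L) + L := by
      conv_lhs => rw [← Nat.sub_add_cancel han, ← Nat.mod_add_mod]
      exact Nat.mod_eq_of_lt (by have := hna.2; omega)
    have := hn.2
    omega
  · omega

theorem exists_sub (hL : Even L) (hL2 : 2 ≤ L) {n : ℕ} (hn : ¬nimOneLSuccLosing L n) :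
    ∃ a ∈ ({1, L, L + 1} : Finset ℕ), a ≤ n ∧ nimOneLSuccLosing L (n - a) := by
  have hLmod := Nat.even_iff.mp hL
  have hlt : n % (2 * L) < 2 * L := Nat.mod_lt n (by omega)
  have hle : n % (2 * L) ≤ n := Nat.mod_le n _
  have hn' : ¬(n % (2 * L) % 2 = 0 ∧ n % (2 * L) ≤ L - 2) := by
    rwa [nimOneLSuccLosing, Nat.even_iff] at hn
  have move : ∀ a ∈ ({1, L, L + 1} : Finset ℕ), a ≤ n % (2 * L) → (n % (2 * L) - a) % 2 = 0 →
      n % (2 * L) - a ≤ L - 2 →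
      ∃ a ∈ ({1, L, L + 1} : Finset ℕ), a ≤ n ∧ nimOneLSuccLosing L (n - a) :=
    fun a ha har heven hdiff =>
      ⟨a, ha, har.trans hle, sub_of_le_mod har (Nat.even_iff.mpr heven) hdiff⟩
  by_cases hodd : n % (2 * L) % 2 = 1
  · by_cases hsmall : n % (2 * L) < L
    · exact move 1 (by simp) (by omega) (by omega) (by omega)
    · exact move (L + 1) (by simp) (by omega) (by omega) (by omega)
  · exact move L (by simp) (by omega) (by omega) (by omega)

theorem iff_forall_not_sub (hL : Even L) (hL2 : 2 ≤ L) (n : ℕ) :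
    nimOneLSuccLosing L n ↔
      ∀ a ∈ ({1, L, L + 1} : Finset ℕ), a ≤ n → ¬nimOneLSuccLosing L (n - a) := by
  refine ⟨fun hn a ha han => hn.not_sub hL (by omega) ha han, fun h => ?_⟩
  by_contra hn
  obtain ⟨a, ha, han, hna⟩ := exists_sub hL hL2 hn
  exact h a ha han hna

end nimOneLSuccLosing

/-- NIM({1,L,L+1};n), L even ≥ 2: second player wins iff n mod 2L is an even
number in {0,2,...,L-2}. -/
theorem nim_one_L_Lsucc_even (L : ℕ) (hL : Even L) (hL2 : 2 ≤ L)
    (P : ℕ → Prop)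
    (hP : ∀ n, P n ↔ ∀ a ∈ ({1, L, L + 1} : Finset ℕ), a ≤ n → ¬ P (n - a)) :
    ∀ n, P n ↔ (Even (n % (2 * L)) ∧ n % (2 * L) ≤ L - 2) := by
  have hpos : ∀ a ∈ (({1, L, L + 1} : Finset ℕ) : Set ℕ), 0 < a := by
    simp only [Finset.coe_insert, Finset.coe_singleton, Set.mem_insert_iff,
      Set.mem_singleton_iff, forall_eq_or_imp, forall_eq]
    omega
  exact nim_iff_of_recursion hpos hP (nimOneLSuccLosing.iff_forall_not_sub hL hL2)
end

section
/- For NIM with subtraction set A = {1, L, L+1} where L is odd and L ≥ 3, the second player wins the game with n stones if and only if n mod (2L+1) is an even number in {0, 2, 4, ..., L-1}. -/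
/-! The predicate "n is a second-player win" is the unique solution of the game recursion, because
the recursion determines `P n` from the values below `n` once `0` is not a move. So it suffices to
check that the claimed description satisfies the recursion, which only involves the residue of `n`
modulo `2L + 1` and of its three predecessors. -/

theorem Nat.sub_mod_of_le_mod {m a n : ℕ} (h : a ≤ n % m) : (n - a) % m = n % m - a := by
  rcases m.eq_zero_or_pos with rfl | hm
  · simp
  have hn : n - a = (n % m - a) + m * (n / m) := by have := Nat.mod_add_div n m; omega
  rw [hn, Nat.add_mul_mod_self_left, Nat.mod_eq_of_lt (by have := Nat.mod_lt n hm; omega)]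

theorem Nat.sub_mod_of_mod_lt {m a n : ℕ} (h : n % m < a) (ham : a ≤ m) (han : a ≤ n) :
    (n - a) % m = n % m + m - a := by
  have hm : 0 < m := by omega
  have hmn : m ≤ n := by
    by_contra! hnm
    rw [Nat.mod_eq_of_lt hnm] at h
    omega
  have hn : n - a = (n % m + m - a) + m * (n / m - 1) := by
    have := Nat.mod_add_div n m
    have := Nat.le_mul_of_pos_right m (Nat.div_pos hmn hm)
    rw [Nat.mul_sub_one]
    omega
  rw [hn, Nat.add_mul_mod_self_left, Nat.mod_eq_of_lt (by omega)]

def IsNimPPositions (A : Set ℕ) (P : ℕ → Prop) : Prop :=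
  ∀ n, P n ↔ ∀ a ∈ A, a ≤ n → ¬ P (n - a)

theorem IsNimPPositions.unique {A : Set ℕ} {P Q : ℕ → Prop} (h0 : 0 ∉ A)
    (hP : IsNimPPositions A P) (hQ : IsNimPPositions A Q) : P = Q := by
  funext n
  induction n using Nat.strong_induction_on with
  | _ n ih =>
    rw [propext (hP n), propext (hQ n)]
    refine propext <| forall₂_congr fun a ha => imp_congr_right fun han => not_congr ?_
    have : a ≠ 0 := fun h => h0 (h ▸ ha)
    exact iff_of_eq (ih _ (by omega))

theorem isNimPPositions_one_L_succ {L : ℕ} (hL : Odd L) :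
    IsNimPPositions {1, L, L + 1}
      (fun n => Even (n % (2 * L + 1)) ∧ n % (2 * L + 1) ≤ L - 1) := by
  intro n
  simp only [Set.mem_insert_iff, Set.mem_singleton_iff, forall_eq_or_imp, forall_eq, Nat.even_iff]
  have hr : n % (2 * L + 1) < 2 * L + 1 := Nat.mod_lt _ (by omega)
  have hrn : n % (2 * L + 1) ≤ n := Nat.mod_le _ _
  have hmove : ∀ a, a ≤ 2 * L + 1 → a ≤ n →
      (a ≤ n % (2 * L + 1) ∧ (n - a) % (2 * L + 1) = n % (2 * L + 1) - a) ∨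
      (n % (2 * L + 1) < a ∧ (n - a) % (2 * L + 1) = n % (2 * L + 1) + (2 * L + 1) - a) := by
    intro a ham han
    rcases le_or_gt a (n % (2 * L + 1)) with h | h
    · exact .inl ⟨h, Nat.sub_mod_of_le_mod h⟩
    · exact .inr ⟨h, Nat.sub_mod_of_mod_lt h ham han⟩
  have move1 := hmove 1
  have moveL := hmove L
  have moveL1 := hmove (L + 1)
  obtain ⟨k, rfl⟩ := hL
  -- With r = n % (2L+1): an even r ≤ L - 1 only reaches the odd r - 1 or, wrapping around,
  -- r + L and r + L + 1, which exceed L - 1. Any other r reaches an even residue ≤ L - 1: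
  -- by the move 1 if r ≤ L is odd, else by whichever of L, L + 1 leaves an even remainder.
  omega

theorem nim_one_L_Lsucc_odd_general (L : ℕ) (hL : Odd L)
    (P : ℕ → Prop)
    (hP : ∀ n, P n ↔ ∀ a ∈ ({1, L, L + 1} : Finset ℕ), a ≤ n → ¬ P (n - a)) :
    ∀ n, P n ↔ (Even (n % (2 * L + 1)) ∧ n % (2 * L + 1) ≤ L - 1) := by
  have hP' : IsNimPPositions {1, L, L + 1} P := by simpa [IsNimPPositions] using hP
  have h0 : 0 ∉ ({1, L, L + 1} : Set ℕ) := by simp [hL.pos.ne]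
  rw [hP'.unique h0 (isNimPPositions_one_L_succ hL)]
  exact fun n => Iff.rfl

/-- NIM({1,L,L+1};n), L odd ≥ 3: second player wins iff n mod (2L+1) is an even
number in {0,2,...,L-1}. -/
theorem nim_one_L_Lsucc_odd (L : ℕ) (hL : Odd L) (hL3 : 3 ≤ L)
    (P : ℕ → Prop)
    (hP : ∀ n, P n ↔ ∀ a ∈ ({1, L, L + 1} : Finset ℕ), a ≤ n → ¬ P (n - a)) :
    ∀ n, P n ↔ (Even (n % (2 * L + 1)) ∧ n % (2 * L + 1) ≤ L - 1) :=
  nim_one_L_Lsucc_odd_general L hL P hP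
end

section
/- In NIM with Cash with subtraction set A = {1, 2}, if Player 1 has d dollars, Player 2 has e dollars, the pile has n stones, and e < d < n/2 + 1 (i.e., Player 2 has strictly less money than Player 1 and Player 1 is below the middle-class threshold M₁(n)), then Player 1 wins. -/
/-!
The richer player keeps the invariant `e < d ∧ d + e ≤ n` (own money `d`, opponent's money `e`)
by always taking a single stone: whatever `b ≥ 1` stones the opponent answers with, the mover's
money `d - 1` still exceeds the opponent's `e - b`, and both the pile and the total money have
dropped by `1 + b`. Under the invariant the mover can always afford a stone, so never gets stuck.
From `e < d ≤ n / 2` the invariant holds at the start.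
-/

def IsNimCashWin (A : Finset ℕ) (W : ℕ → ℕ → ℕ → Prop) : Prop :=
  ∀ n m m', W n m m' ↔ ∃ a ∈ A, a ≤ n ∧ a ≤ m ∧ ¬ W (n - a) m' (m - a)

namespace IsNimCashWin

variable {A : Finset ℕ} {W : ℕ → ℕ → ℕ → Prop}

theorem wins_of_lt_of_add_le (hW : IsNimCashWin A W) (h1 : 1 ∈ A) (h0 : 0 ∉ A) :
    ∀ {e d n : ℕ}, e < d → d + e ≤ n → W n d e := by
  intro e
  induction e using Nat.strong_induction_on with
  | _ e ih =>
    intro d n hde hdn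
    refine (hW _ _ _).2 ⟨1, h1, by omega, by omega, ?_⟩
    intro hopp
    obtain ⟨b, hbA, hbn, hbe, hlose⟩ := (hW _ _ _).1 hopp
    have hb : 0 < b := Nat.pos_of_ne_zero fun hb => h0 (hb ▸ hbA)
    exact hlose (ih (e - b) (by omega) (by omega) (by omega))

end IsNimCashWin

/-- NIM with Cash, A = {1,2}: if e < d < n/2 + 1 (Player 2 has strictly less
money than Player 1 and Player 1 is below the middle-class threshold M₁(n)),
then Player 1 wins. -/
theorem nimCash_12_poor_p1_wins (W : ℕ → ℕ → ℕ → Prop)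
    (hW : ∀ n m m', W n m m' ↔
      ∃ a ∈ ({1, 2} : Finset ℕ), a ≤ n ∧ a ≤ m ∧ ¬ W (n - a) m' (m - a))
    (n d e : ℕ) (hde : e < d) (hd : d < n / 2 + 1) :
    W n d e :=
  IsNimCashWin.wins_of_lt_of_add_le hW (by decide) (by decide) hde (by omega)
end

section
/- In NIM with Cash with subtraction set A = {1, 2}, if the pile has n stones and both d < M₁(n) and e < M₂(n) with d ≤ e (Player 1 has at most as much money as Player 2 and both are lower class), then Player 2 wins. Here M₁(n) = n/2 + 1, M₂(n) = n/2 for even n and M₁(n) = M₂(n) = (n+1)/2 for odd n. -/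
/-!
Player 2 copies every move of Player 1. Each round then removes `2a` stones and `a` dollars
from each player, so `d ≤ e` and `2e < n` are preserved, and they guarantee that the copied
move is legal. Hence Player 2 always has a reply and Player 1 eventually has none. The
bound `e < M₂(n)` is just `2e < n`, since `M₂(n) = ⌈n/2⌉`.
-/

theorem nimCash_not_win_of_le_of_two_mul_lt {A : Finset ℕ} (hA : ∀ a ∈ A, 0 < a)
    {W : ℕ → ℕ → ℕ → Prop}
    (hW : ∀ n m m', W n m m' ↔ ∃ a ∈ A, a ≤ n ∧ a ≤ m ∧ ¬ W (n - a) m' (m - a))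
    {n d e : ℕ} (hde : d ≤ e) (he : 2 * e < n) : ¬ W n d e := by
  induction n using Nat.strong_induction_on generalizing d e with
  | _ n ih =>
  rw [hW]
  rintro ⟨a, ha, -, had, h_reply_loses⟩
  have ha_pos := hA a ha
  refine h_reply_loses ((hW _ _ _).2 ⟨a, ha, by omega, by omega, ?_⟩)
  exact ih (n - a - a) (by omega) (by omega : d - a ≤ e - a) (by omega)

theorem nimCash_12_poor_p2_wins_general (W : ℕ → ℕ → ℕ → Prop)
    (hW : ∀ n m m', W n m m' ↔
      ∃ a ∈ ({1, 2} : Finset ℕ), a ≤ n ∧ a ≤ m ∧ ¬ W (n - a) m' (m - a))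
    (n d e : ℕ)
    (he : e < if Even n then n / 2 else (n + 1) / 2)
    (hde : d ≤ e) :
    ¬ W n d e :=
  nimCash_not_win_of_le_of_two_mul_lt (by simp) hW hde (by split_ifs at he <;> omega)

/-- NIM with Cash, A = {1,2}: if d < M₁(n), e < M₂(n) and d ≤ e, then
Player 2 wins, where M₁(n) = n/2+1, M₂(n) = n/2 for even n and
M₁(n) = M₂(n) = (n+1)/2 for odd n. -/
theorem nimCash_12_poor_p2_wins (W : ℕ → ℕ → ℕ → Prop)
    (hW : ∀ n m m', W n m m' ↔
      ∃ a ∈ ({1, 2} : Finset ℕ), a ≤ n ∧ a ≤ m ∧ ¬ W (n - a) m' (m - a))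
    (n d e : ℕ)
    (hd : d < if Even n then n / 2 + 1 else (n + 1) / 2)
    (he : e < if Even n then n / 2 else (n + 1) / 2)
    (hde : d ≤ e) :
    ¬ W n d e :=
  nimCash_12_poor_p2_wins_general W hW n d e he hde
end

section
/- In NIM with Cash with subtraction set A = {1, 2} and an even number n of stones, if Player 1 has d dollars with d < n/2 + 1 and Player 2 has e dollars with e ≥ n/2, then Player 2 wins. -/
/-! Player 2 mirrors: whenever Player 1 removes `a` stones, Player 2 removes `a` stones too.
From `2k` stones with `d ≤ k ≤ e` this is always legal, since `a ≤ d ≤ k`, and it restores the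
invariant at `2(k - a)` stones with `d - a ≤ k - a ≤ e - a`. -/

theorem not_win_add_self_of_le_of_le {A : Set ℕ} (hA : ∀ a ∈ A, 0 < a) (W : ℕ → ℕ → ℕ → Prop)
    (hW : ∀ n m m', W n m m' ↔ ∃ a ∈ A, a ≤ n ∧ a ≤ m ∧ ¬ W (n - a) m' (m - a))
    {k d e : ℕ} (hd : d ≤ k) (he : k ≤ e) : ¬ W (k + k) d e := by
  induction k using Nat.strong_induction_on generalizing d e with
  | _ k ih =>
    intro hwin
    obtain ⟨a, ha, -, had, hlose⟩ := (hW _ _ _).1 hwin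
    refine hlose ((hW _ _ _).2 ⟨a, ha, by omega, by omega, ?_⟩)
    have ha₀ := hA a ha
    have hrest : k + k - a - a = (k - a) + (k - a) := by omega
    rw [hrest]
    exact ih (k - a) (by omega) (by omega) (by omega)

/-- NIM with Cash, A = {1,2}, n even: if d < n/2 + 1 and e ≥ n/2, then
Player 2 wins. -/
theorem nimCash_12_even_p2_wins (W : ℕ → ℕ → ℕ → Prop)
    (hW : ∀ n m m', W n m m' ↔
      ∃ a ∈ ({1, 2} : Finset ℕ), a ≤ n ∧ a ≤ m ∧ ¬ W (n - a) m' (m - a))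
    (n d e : ℕ) (hn : Even n) (hd : d < n / 2 + 1) (he : n / 2 ≤ e) :
    ¬ W n d e := by
  obtain ⟨k, rfl⟩ := hn
  exact not_win_add_self_of_le_of_le (A := ↑({1, 2} : Finset ℕ)) (by simp) W hW
    (by omega) (by omega)
end

section
/- In NIM with Cash with subtraction set A = {1, 2} and even n with n ≡ 0 or 2 or 4 (mod 6), writing M₁(n) = n/2 + 1 and M₂(n) = n/2: for every k ≥ 0, if M₁(n) + k ≤ d < M₁(n) + k + 1 (i.e., d = n/2 + 1 + k) and e < M₂(n) + k + 1, and moreover d is below the upper-class threshold (both players middle class), then Player 1 wins NIM({1,2}; n; d, e). -/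
/-!
Solving the game outright: a player to move with `m` dollars against an opponent with `m'`
dollars wins NIM({1,2}) with cash on `n > 0` stones exactly when `m > 0` and, if `3 ∣ n`, they are
strictly richer and `m'` is below the losing player's upper-class threshold, and otherwise they
are strictly richer or at least at the winning player's upper-class threshold. This closed form
satisfies the defining recursion, which determines the win predicate uniquely. In the theorem
`e < d`, so Player 1 is strictly richer, and `d < U₁(n)` keeps `e` below the threshold when `3 ∣ n`.
-/

/-- Upper-class threshold for the winning player in NIM({1,2};n)
(Theorem 3.1 with L = 2, writing n = 3k + i). -/
def nimUwin12 (n : ℕ) : ℕ :=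
  if n % 3 = 2 then 2 * (n / 3 + 1) else 2 * (n / 3) + n % 3

/-- Upper-class threshold for the losing player in NIM({1,2};n). -/
def nimUlose12 (n : ℕ) : ℕ :=
  if n < 2 then n / 2 else if n % 3 = 2 then 2 * (n / 3) + 1 else 2 * (n / 3)

/-- Player 1's upper-class threshold U₁(n) for A = {1,2}
(the second player wins ordinary NIM({1,2};n) iff 3 ∣ n). -/
def nimU1 (n : ℕ) : ℕ := if n % 3 = 0 then nimUlose12 n else nimUwin12 n

/-- Player 2's upper-class threshold U₂(n) for A = {1,2}. -/
def nimU2 (n : ℕ) : ℕ := if n % 3 = 0 then nimUwin12 n else nimUlose12 n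

theorem IsNimCashWin.iff {A : Finset ℕ} (hA : ∀ a ∈ A, 0 < a) {W W' : ℕ → ℕ → ℕ → Prop}
    (hW : IsNimCashWin A W) (hW' : IsNimCashWin A W') (n m m' : ℕ) :
    W n m m' ↔ W' n m m' := by
  induction n using Nat.strong_induction_on generalizing m m' with
  | _ n ih =>
    rw [hW, hW']
    refine exists_congr fun a => and_congr_right fun ha => ?_
    refine and_congr_right fun han => and_congr_right fun _ => not_congr ?_
    exact ih (n - a) (Nat.sub_lt_of_pos_le (hA a ha) han) _ _

def nimCash12Win (n m m' : ℕ) : Prop :=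
  0 < n ∧ 0 < m ∧
    if n % 3 = 0 then m' < m ∧ m' < nimUlose12 n else m' < m ∨ nimUwin12 n ≤ m

theorem isNimCashWin_nimCash12Win : IsNimCashWin {1, 2} nimCash12Win := by
  intro n m m'
  simp only [Finset.mem_insert, Finset.mem_singleton, exists_eq_or_imp, exists_eq_left]
  unfold nimCash12Win nimUlose12 nimUwin12
  split_ifs <;> omega

theorem nimCash12Win_of_lt_of_lt_nimU1 {n m m' : ℕ} (hm' : m' < m) (hm : m < nimU1 n) :
    nimCash12Win n m m' := by
  unfold nimCash12Win
  unfold nimU1 at hm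
  split_ifs at hm ⊢
  · have hn : n ≠ 0 := by rintro rfl; simp [nimUlose12] at hm
    exact ⟨Nat.pos_of_ne_zero hn, by omega, hm', hm'.trans hm⟩
  · exact ⟨by omega, by omega, Or.inl hm'⟩

theorem nimCash_12_staircase_p1_general (W : ℕ → ℕ → ℕ → Prop)
    (hW : ∀ n m m', W n m m' ↔
      ∃ a ∈ ({1, 2} : Finset ℕ), a ≤ n ∧ a ≤ m ∧ ¬ W (n - a) m' (m - a))
    (n d e k : ℕ)
    (hd : d = n / 2 + 1 + k) (he : e < n / 2 + k + 1)
    (hupper : d < nimU1 n) :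
    W n d e := by
  have hpos : ∀ a ∈ ({1, 2} : Finset ℕ), 0 < a := by decide
  rw [IsNimCashWin.iff hpos hW isNimCashWin_nimCash12Win]
  exact nimCash12Win_of_lt_of_lt_nimU1 (by omega : e < d) hupper

/-- Staircase theorem rung for A = {1,2}, even n with n ≡ 0, 2 or 4 (mod 6):
if d = M₁(n) + k = n/2 + 1 + k, e < M₂(n) + k + 1 = n/2 + k + 1, and d is
below the upper-class threshold, then Player 1 wins. -/
theorem nimCash_12_staircase_p1 (W : ℕ → ℕ → ℕ → Prop)
    (hW : ∀ n m m', W n m m' ↔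
      ∃ a ∈ ({1, 2} : Finset ℕ), a ≤ n ∧ a ≤ m ∧ ¬ W (n - a) m' (m - a))
    (n d e k : ℕ) (hn : n % 6 = 0 ∨ n % 6 = 2 ∨ n % 6 = 4)
    (hd : d = n / 2 + 1 + k) (he : e < n / 2 + k + 1)
    (hupper : d < nimU1 n) :
    W n d e :=
  nimCash_12_staircase_p1_general W hW n d e k hd he hupper
end

section
/- In NIM with Cash with subtraction set A = {1, 2} and even n ≡ 0 or 2 or 4 (mod 6), if d = n/2 + 1 + k and e ≥ n/2 + k + 1 for some natural number k (and e is below Player 2's upper-class threshold), then Player 2 wins NIM({1,2}; n; d, e). -/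
namespace NimCash12

/-- For `3 ∣ n` the second alternative says that the opponent can afford the cash-free
strategy of answering `a` with `3 - a`. -/
def MoverLoses (n m m' : ℕ) : Prop :=
  (n % 3 = 0 ∧ (m ≤ m' ∨ 2 * (n / 3) ≤ m')) ∨ (n % 3 ≠ 0 ∧ 3 * m ≤ 2 * n ∧ m ≤ m')

theorem moverLoses_iff (n m m' : ℕ) :
    MoverLoses n m m' ↔
      ¬ ((1 ≤ n ∧ 1 ≤ m ∧ MoverLoses (n - 1) m' (m - 1)) ∨
        (2 ≤ n ∧ 2 ≤ m ∧ MoverLoses (n - 2) m' (m - 2))) := by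
  unfold MoverLoses
  omega

variable {W : ℕ → ℕ → ℕ → Prop}

theorem win_iff_of_rec
    (hW : ∀ n m m', W n m m' ↔
      ∃ a ∈ ({1, 2} : Finset ℕ), a ≤ n ∧ a ≤ m ∧ ¬ W (n - a) m' (m - a))
    (n m m' : ℕ) :
    W n m m' ↔
      (1 ≤ n ∧ 1 ≤ m ∧ ¬ W (n - 1) m' (m - 1)) ∨
        (2 ≤ n ∧ 2 ≤ m ∧ ¬ W (n - 2) m' (m - 2)) := by
  simp only [hW n, Finset.exists_mem_insert, Finset.mem_singleton, exists_eq_left]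

theorem not_win_iff_moverLoses_of_rec
    (hW : ∀ n m m', W n m m' ↔
      ∃ a ∈ ({1, 2} : Finset ℕ), a ≤ n ∧ a ≤ m ∧ ¬ W (n - a) m' (m - a))
    (n m m' : ℕ) :
    ¬ W n m m' ↔ MoverLoses n m m' := by
  induction n using Nat.strong_induction_on generalizing m m' with
  | _ n ih =>
    rw [win_iff_of_rec hW, moverLoses_iff]
    refine not_congr (or_congr ?_ ?_) <;>
      refine and_congr_right fun hn => and_congr_right fun _ => ih _ (by omega) _ _

theorem moverLoses_of_le_of_lt_nimU2 {n d e : ℕ} (hde : d ≤ e) (he : e < nimU2 n) :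
    MoverLoses n d e := by
  unfold nimU2 nimUwin12 nimUlose12 at he
  unfold MoverLoses
  split_ifs at he <;> omega

end NimCash12

open NimCash12 in
theorem nimCash_12_staircase_p2_general (W : ℕ → ℕ → ℕ → Prop)
    (hW : ∀ n m m', W n m m' ↔
      ∃ a ∈ ({1, 2} : Finset ℕ), a ≤ n ∧ a ≤ m ∧ ¬ W (n - a) m' (m - a))
    (n d e k : ℕ)
    (hd : d = n / 2 + 1 + k) (he : n / 2 + k + 1 ≤ e)
    (hupper : e < nimU2 n) :
    ¬ W n d e :=
  (not_win_iff_moverLoses_of_rec hW n d e).2 (moverLoses_of_le_of_lt_nimU2 (by omega) hupper)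

/-- Staircase theorem rung for A = {1,2}, even n ≡ 0, 2 or 4 (mod 6):
if d = n/2 + 1 + k and e ≥ n/2 + k + 1, with e below Player 2's
upper-class threshold, then Player 2 wins. -/
theorem nimCash_12_staircase_p2 (W : ℕ → ℕ → ℕ → Prop)
    (hW : ∀ n m m', W n m m' ↔
      ∃ a ∈ ({1, 2} : Finset ℕ), a ≤ n ∧ a ≤ m ∧ ¬ W (n - a) m' (m - a))
    (n d e k : ℕ) (hn : n % 6 = 0 ∨ n % 6 = 2 ∨ n % 6 = 4)
    (hd : d = n / 2 + 1 + k) (he : n / 2 + k + 1 ≤ e)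
    (hupper : e < nimU2 n) :
    ¬ W n d e :=
  nimCash_12_staircase_p2_general W hW n d e k hd he hupper
end

section
/- In NIM with Cash with subtraction set A = {1, L} for even L ≥ 2, if Player 1's money d satisfies d ≥ n and Player 1 wins ordinary NIM({1,L}; n), then Player 1 wins NIM({1,L}; n; d, e) for all e. -/
/-- NIM with Cash, A = {1,L}, L even ≥ 2: if d ≥ n (Player 1 effectively
infinitely rich) and Player 1 wins ordinary NIM({1,L};n), then Player 1 wins
the cash game NIM({1,L};n;d,e) for all e. -/
theorem nimCash_rich_p1_wins (L : ℕ) (hL : Even L) (hL2 : 2 ≤ L)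
    (P : ℕ → Prop)
    (hP : ∀ n, P n ↔ ∀ a ∈ ({1, L} : Finset ℕ), a ≤ n → ¬ P (n - a))
    (W : ℕ → ℕ → ℕ → Prop)
    (hW : ∀ n m m', W n m m' ↔
      ∃ a ∈ ({1, L} : Finset ℕ), a ≤ n ∧ a ≤ m ∧ ¬ W (n - a) m' (m - a))
    (n d e : ℕ) (hd : n ≤ d) (hwin : ¬ P n) :
    W n d e := by
  have key : ∀ n, (∀ m m', n ≤ m → ¬ P n → W n m m') ∧
      (∀ m m', n ≤ m' → P n → ¬ W n m m') := by
    intro n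
    induction n using Nat.strong_induction_on with
    | _ n ih =>
      constructor
      · intro m m' hm hnp
        rw [hP] at hnp; push_neg at hnp
        obtain ⟨a, ha, han, hpa⟩ := hnp
        have ha1 : 1 ≤ a := by
          simp only [Finset.mem_insert, Finset.mem_singleton] at ha; omega
        rw [hW]
        exact ⟨a, ha, han, le_trans han hm,
          (ih (n - a) (by omega)).2 m' (m - a) (by omega) hpa⟩
      · intro m m' hm' hp hw
        rw [hW] at hw
        obtain ⟨a, ha, han, ham, hnw⟩ := hw
        have ha1 : 1 ≤ a := by
          simp only [Finset.mem_insert, Finset.mem_singleton] at ha; omega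
        have hnp : ¬ P (n - a) := (hP n).1 hp a ha han
        exact hnw ((ih (n - a) (by omega)).1 m' (m - a) (by omega) hnp)
  exact (key n).1 d e hd hwin
end

section
/- In NIM with Cash with subtraction set A = {1, 2} and n ≡ 3 (mod 6), if d < M₁(n) + 1 = (n+1)/2 + 1 and e ≥ M₂(n) = (n+1)/2, then Player 2 wins NIM({1,2}; n; d, e). -/
/-!
Write `c n = n - n / 3 = ⌈2n/3⌉`. The mover loses from pile `n` with cash `m` against cash `m'`
exactly when `3 ∣ n` or `m < c n`, and moreover `min m (c n) ≤ m'`. Both sides of this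
characterization satisfy the same recursion over the moves `{1, 2}`, so they agree by strong
induction on the pile; the one-step check is linear arithmetic. For `n ≡ 3 (mod 6)` we have
`3 ∣ n` and `d ≤ e`, so Player 1 loses.
-/

namespace NimCash12

def Losing (n m m' : ℕ) : Prop :=
  (n % 3 = 0 ∨ m < n - n / 3) ∧ min m (n - n / 3) ≤ m'

theorem losing_iff_forall_move (n m m' : ℕ) :
    Losing n m m' ↔
      ∀ a ∈ ({1, 2} : Finset ℕ), a ≤ n → a ≤ m → ¬ Losing (n - a) m' (m - a) := by
  simp only [Finset.mem_insert, Finset.mem_singleton, forall_eq_or_imp, forall_eq, Losing]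
  omega

theorem not_iff_losing (W : ℕ → ℕ → ℕ → Prop)
    (hW : ∀ n m m', W n m m' ↔
      ∃ a ∈ ({1, 2} : Finset ℕ), a ≤ n ∧ a ≤ m ∧ ¬ W (n - a) m' (m - a))
    (n m m' : ℕ) : ¬ W n m m' ↔ Losing n m m' := by
  induction n using Nat.strong_induction_on generalizing m m' with
  | _ n ih =>
    rw [hW, losing_iff_forall_move]
    simp only [not_exists, not_and]
    refine forall₂_congr fun a ha => imp_congr_right fun han => imp_congr_right fun _ => ?_
    have ha_pos : 0 < a := by simp only [Finset.mem_insert, Finset.mem_singleton] at ha; omega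
    rw [← ih (n - a) (by omega), not_not]

theorem losing_of_mod_three_eq_zero {n m m' : ℕ} (hn : n % 3 = 0) (hm : m ≤ m') :
    Losing n m m' :=
  ⟨Or.inl hn, (min_le_left _ _).trans hm⟩

end NimCash12

/-- NIM with Cash, A = {1,2}, n ≡ 3 (mod 6): if d < (n+1)/2 + 1 and
e ≥ (n+1)/2, then Player 2 wins. -/
theorem nimCash_12_mod6_3_p2_wins (W : ℕ → ℕ → ℕ → Prop)
    (hW : ∀ n m m', W n m m' ↔
      ∃ a ∈ ({1, 2} : Finset ℕ), a ≤ n ∧ a ≤ m ∧ ¬ W (n - a) m' (m - a))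
    (n d e : ℕ) (hn : n % 6 = 3)
    (hd : d < (n + 1) / 2 + 1) (he : (n + 1) / 2 ≤ e) :
    ¬ W n d e :=
  (NimCash12.not_iff_losing W hW n d e).2
    (NimCash12.losing_of_mod_three_eq_zero (by omega) (by omega))
end
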